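/- Suppose for each Weil algebra W the assignment Γ ↦ Lim Γ commutes with the functor (−) ⊗ W on diagrams (i.e., all objects of the diagram Γ are Weil-exponentiable and limits are transversal). Then the limit of a diagram of Weil-exponentiable objects is Weil-exponentiable: (Lim Γ ⊗ (W_1 ⊗ W_2))^Y ≅ ((Lim Γ ⊗ W_1)^Y) ⊗ W_2 naturally, given that each object X of Γ satisfies (X ⊗ (W_1 ⊗ W_2))^Y ≅ ((X ⊗ W_1)^Y) ⊗ W_2. -/

import Mathlib

open CategoryTheory CategoryTheory.Limits

/-- Proposition 2.3.1.4, abstractly: in a category `C` with limits of shape `J`, let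
`T w : C ⥤ C` be the Weil prolongation functor `(−) ⊗ w` for each Weil algebra `w`
(with monoidal product `mul`), and `E : C ⥤ C` the exponential `(−)^Y`.  Assume that
limits of shape `J` are transversal, i.e. commute with every `T w` and with `E`, and
that every object of the diagram `F : J ⥤ C` is Weil-exponentiable in the sense that
`F ⋙ T (mul W₁ W₂) ⋙ E ≅ F ⋙ T W₁ ⋙ E ⋙ T W₂` naturally.  Then the limit of
`F` is Weil-exponentiable:
`(Lim F ⊗ (W₁ ⊗ W₂))^Y ≅ ((Lim F ⊗ W₁)^Y) ⊗ W₂`. -/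
theorem limit_weil_exponentiable {C : Type*} [Category C] {J : Type*} [SmallCategory J]
    [HasLimitsOfShape J C]
    (Wt : Type*) (mul : Wt → Wt → Wt)
    (T : Wt → C ⥤ C) (E : C ⥤ C)
    (htensorlim : ∀ (G : J ⥤ C) (w : Wt), (T w).obj (limit G) ≅ limit (G ⋙ T w))
    (hexplim : ∀ G : J ⥤ C, E.obj (limit G) ≅ limit (G ⋙ E))
    (F : J ⥤ C)
    (hWE : ∀ W₁ W₂ : Wt, (F ⋙ T (mul W₁ W₂) ⋙ E) ≅ (F ⋙ T W₁ ⋙ E ⋙ T W₂))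
    (W₁ W₂ : Wt) :
    Nonempty (E.obj ((T (mul W₁ W₂)).obj (limit F)) ≅
      (T W₂).obj (E.obj ((T W₁).obj (limit F)))) := by
  refine ⟨E.mapIso (htensorlim F (mul W₁ W₂)) ≪≫ hexplim (F ⋙ T (mul W₁ W₂)) ≪≫
    HasLimit.isoOfNatIso ((Functor.associator F (T (mul W₁ W₂)) E).symm ≪≫
      hWE W₁ W₂ ≪≫ (Functor.associator F (T W₁) (E ⋙ T W₂)) ≪≫
      Functor.isoWhiskerLeft F (Functor.associator (T W₁) E (T W₂)).symm ≪≫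
      (Functor.associator F (T W₁ ⋙ E) (T W₂)).symm) ≪≫
    (htensorlim (F ⋙ T W₁ ⋙ E) W₂).symm ≪≫
    (T W₂).mapIso ((hexplim (F ⋙ T W₁)).symm ≪≫ E.mapIso (htensorlim F W₁).symm)⟩
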